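/- Let σ_k denote the k-th elementary symmetric polynomial on ℝⁿ and Γ_k = {λ ∈ ℝⁿ : σ_j(λ) > 0 for j = 1,…,k}. Then Γ_k is an open convex cone with vertex at the origin, symmetric under permutations of coordinates, and contains the positive cone Γ⁺ = {λ : λᵢ > 0 ∀i}. -/

import Mathlib

/-- The `k`-th elementary symmetric polynomial on `ℝⁿ`. -/
noncomputable def esymmFun (n k : ℕ) (lam : Fin n → ℝ) : ℝ :=
  ∑ t ∈ Finset.univ.powersetCard k, ∏ i ∈ t, lam i

/-- The Gårding cone `Γ_k = {λ : σ_j(λ) > 0, j = 1,…,k}`. -/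
def GammaK (n k : ℕ) : Set (Fin n → ℝ) :=
  {lam | ∀ j, 1 ≤ j → j ≤ k → 0 < esymmFun n j lam}

/-!
This is Gårding's theory of hyperbolic polynomials, applied to `σ_m`. As a polynomial in `t`,
`σ_m(y + t·1)` is the `(n - m)`-th Hasse derivative of `∏ (t + y_i)`, so by Rolle it has only
real roots; its coefficients are positive multiples of `σ_j(y)`, `j ≤ m`, so `Γ_m` is stable
under `y ↦ y + t·1` for `t ≥ 0` and contains the segment from `1` to any of its points.

Roots of complex polynomials of fixed degree move continuously, so along a compact connected
family none can leave an open set `U` without passing through `closure U \ U`. Moving the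
direction `1` to `x ∈ Γ_m` along that segment, the roots of `z ↦ σ_m(y + i s + z x)` (`s > 0`)
never become real, so they stay in the lower half-plane; letting `s → 0⁺` shows that `σ_m` is
hyperbolic in every direction `x ∈ Γ_m`. Moving the base point from `1` to `y ∈ Γ_m` in the same
way, the (real) roots of `t ↦ σ_m(y + t x)` never reach `0`, so they stay negative, and
`σ_m(y + x) > 0`. Hence `Γ_m` is closed under addition, and so convex.
-/

namespace Garding

open Polynomial Finset Filter Topology

section Esymm

variable {R : Type*} [CommRing R] {n : ℕ}

noncomputable def esymm (m : ℕ) (w : Fin n → R) : R :=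
  ∑ t ∈ univ.powersetCard m, ∏ i ∈ t, w i

theorem esymmFun_eq_esymm (m : ℕ) : esymmFun n m = esymm m := rfl

@[simp]
theorem esymm_zero (w : Fin n → R) : esymm 0 w = 1 := by
  simp [esymm]

theorem map_esymm {S : Type*} [CommRing S] (f : R →+* S) (m : ℕ) (w : Fin n → R) :
    f (esymm m w) = esymm m (fun i => f (w i)) := by
  simp [esymm, map_sum, map_prod]

theorem esymm_smul (c : R) (m : ℕ) (w : Fin n → R) : esymm m (c • w) = c ^ m * esymm m w := by
  rw [esymm, esymm, mul_sum]
  refine sum_congr rfl fun t ht => ?_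
  simp [prod_mul_distrib, (mem_powersetCard.1 ht).2]

theorem esymm_eq_eval_esymm (m : ℕ) (w : Fin n → R) :
    esymm m w = MvPolynomial.eval w (MvPolynomial.esymm (Fin n) R m) := by
  simp [esymm, MvPolynomial.esymm, map_sum, map_prod]

theorem esymm_comp_perm (σ : Equiv.Perm (Fin n)) (m : ℕ) (w : Fin n → R) :
    esymm m (w ∘ σ) = esymm m w := by
  rw [esymm_eq_eval_esymm, ← MvPolynomial.eval_rename, MvPolynomial.rename_esymm,
    esymm_eq_eval_esymm]

theorem continuous_esymm [TopologicalSpace R] [IsTopologicalRing R] (m : ℕ) :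
    Continuous (esymm m : (Fin n → R) → R) := by
  unfold esymm
  fun_prop

theorem esymm_pos {S : Type*} [CommRing S] [PartialOrder S] [IsStrictOrderedRing S] {m : ℕ}
    (hmn : m ≤ n) {w : Fin n → S} (hw : ∀ i, 0 < w i) : 0 < esymm m w := by
  refine sum_pos (fun t _ => prod_pos fun i _ => hw i) ?_
  simpa using hmn

end Esymm

section Taylor

variable {R : Type*} [CommRing R] {n : ℕ}

theorem eval_hasseDeriv_prod_X_add_C {m : ℕ} (hmn : m ≤ n) (w : Fin n → R) (t : R) :
    (hasseDeriv (n - m) (∏ i, (X + C (w i)))).eval t = esymm m (fun i => w i + t) := by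
  rw [← taylor_coeff, taylor_apply, Polynomial.prod_comp]
  simp only [add_comp, X_comp, C_comp, add_assoc, ← C_add, add_comm (C t)]
  rw [prod_X_add_C_coeff _ _ (by simp), card_univ, Fintype.card_fin, Nat.sub_sub_self hmn, esymm]

theorem esymm_add_const {m : ℕ} (hmn : m ≤ n) (w : Fin n → R) (t : R) :
    esymm m (fun i => w i + t) =
      ∑ j ∈ range (m + 1), ((n - m + j).choose (n - m) : R) * esymm (m - j) w * t ^ j := by
  have hdeg : (hasseDeriv (n - m) (∏ i, (X + C (w i)))).natDegree < m + 1 := by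
    refine (natDegree_hasseDeriv_le _ _).trans_lt ?_
    have hP : (∏ i, (X + C (w i))).natDegree ≤ n := by
      refine (natDegree_prod_le _ _).trans ?_
      simpa using sum_le_sum fun i (_ : i ∈ univ) => (natDegree_add_C (a := w i)).trans_le
        (natDegree_X_le (R := R))
    omega
  rw [← eval_hasseDeriv_prod_X_add_C hmn, eval_eq_sum_range' hdeg]
  refine sum_congr rfl fun j hj => ?_
  have hjm : j ≤ m := Nat.lt_succ_iff.1 (mem_range.1 hj)
  rw [hasseDeriv_coeff, prod_X_add_C_coeff _ _ (by simp; omega), card_univ, Fintype.card_fin,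
    show n - (j + (n - m)) = m - j by omega, add_comm j, esymm]

end Taylor

section Cone

variable {n k : ℕ}

theorem gammaK_subset_of_le {j : ℕ} (hjk : j ≤ k) : GammaK n k ⊆ GammaK n j :=
  fun _ h i hi hij => h i hi (hij.trans hjk)

theorem esymm_pos_of_mem_gammaK {lam : Fin n → ℝ} (h : lam ∈ GammaK n k) {j : ℕ}
    (hjk : j ≤ k) : 0 < esymm j lam := by
  rcases Nat.eq_zero_or_pos j with rfl | hj
  · simp
  · exact h j hj hjk

theorem mem_gammaK_of_pos (hkn : k ≤ n) {lam : Fin n → ℝ} (h : ∀ i, 0 < lam i) :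
    lam ∈ GammaK n k :=
  fun _ _ hjk => esymm_pos (hjk.trans hkn) h

theorem smul_mem_gammaK {t : ℝ} (ht : 0 < t) {lam : Fin n → ℝ} (h : lam ∈ GammaK n k) :
    t • lam ∈ GammaK n k := by
  intro j hj hjk
  rw [esymmFun_eq_esymm, esymm_smul]
  exact mul_pos (pow_pos ht j) (h j hj hjk)

theorem comp_perm_mem_gammaK (σ : Equiv.Perm (Fin n)) {lam : Fin n → ℝ}
    (h : lam ∈ GammaK n k) : lam ∘ σ ∈ GammaK n k := by
  intro j hj hjk
  rw [esymmFun_eq_esymm, esymm_comp_perm]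
  exact h j hj hjk

theorem isOpen_gammaK : IsOpen (GammaK n k) := by
  have : GammaK n k = ⋂ j ∈ Icc 1 k, {lam | 0 < esymm j lam} := by
    ext lam
    simp [GammaK, esymmFun_eq_esymm, and_imp]
  rw [this]
  exact isOpen_biInter_finset fun j _ => isOpen_lt continuous_const (continuous_esymm j)

theorem add_const_mem_gammaK (hkn : k ≤ n) {lam : Fin n → ℝ} (h : lam ∈ GammaK n k) {t : ℝ}
    (ht : 0 ≤ t) : (fun i => lam i + t) ∈ GammaK n k := by
  intro j hj hjk
  rw [esymmFun_eq_esymm, esymm_add_const (hjk.trans hkn), sum_range_succ', pow_zero, mul_one,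
    Nat.sub_zero, add_zero, Nat.choose_self, Nat.cast_one, one_mul]
  refine add_pos_of_nonneg_of_pos (sum_nonneg fun i hi => ?_) (h j hj hjk)
  have := esymm_pos_of_mem_gammaK h (j := j - (i + 1)) (by omega)
  positivity

theorem segment_one_subset_gammaK (hkn : k ≤ n) {lam : Fin n → ℝ} (h : lam ∈ GammaK n k) :
    segment ℝ 1 lam ⊆ GammaK n k := by
  rintro _ ⟨a, b, ha, hb, hab, rfl⟩
  rcases hb.eq_or_lt with rfl | hb
  · rw [(by linarith : a = 1)]
    simpa using mem_gammaK_of_pos hkn (lam := 1) fun _ => one_pos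
  · convert smul_mem_gammaK hb (add_const_mem_gammaK hkn h (div_nonneg ha hb.le)) using 1
    ext i
    simp [mul_add, mul_div_cancel₀ _ hb.ne']
    ring

end Cone

section Line

variable {R : Type*} [CommRing R] {n : ℕ}

noncomputable def esymmLine (m : ℕ) (a b : Fin n → R) : R[X] :=
  esymm m (fun i => C (b i) * X + C (a i))

theorem eval_esymmLine (m : ℕ) (a b : Fin n → R) (z : R) :
    (esymmLine m a b).eval z = esymm m (fun i => a i + z * b i) := by
  rw [esymmLine, ← coe_evalRingHom, map_esymm]
  congr 1
  ext i
  simp only [coe_evalRingHom, eval_add, eval_mul, eval_C, eval_X]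
  ring

theorem natDegree_esymmLine_le (m : ℕ) (a b : Fin n → R) : (esymmLine m a b).natDegree ≤ m := by
  rw [esymmLine, esymm]
  refine natDegree_sum_le_of_forall_le _ _ fun t ht =>
    (natDegree_prod_le _ _).trans ?_
  rw [← (mem_powersetCard.1 ht).2, card_eq_sum_ones]
  exact sum_le_sum fun i _ => natDegree_linear_le

theorem coeff_esymmLine (m : ℕ) (a b : Fin n → R) : (esymmLine m a b).coeff m = esymm m b := by
  rw [esymmLine, esymm, finsetSum_coeff, esymm]
  refine sum_congr rfl fun t ht => ?_
  conv_lhs => rw [← (mem_powersetCard.1 ht).2, ← mul_one #t]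
  rw [coeff_prod_of_natDegree_le _ _ 1 fun _ _ => natDegree_linear_le]
  simp

end Line

section ContinuousCoeff

variable (T R : Type*) [TopologicalSpace T] [CommRing R] [TopologicalSpace R]
  [IsTopologicalRing R]

def continuousCoeffSubring : Subring (T → R[X]) where
  carrier := {p | ∀ j, Continuous fun u => (p u).coeff j}
  mul_mem' {p q} hp hq j := by
    simp only [Pi.mul_apply, coeff_mul]
    exact continuous_finsetSum _ fun x _ => (hp x.1).mul (hq x.2)
  one_mem' j := by
    simp only [Pi.one_apply, coeff_one]
    exact continuous_const
  add_mem' hp hq j := by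
    simp only [Pi.add_apply, coeff_add]
    exact (hp j).add (hq j)
  zero_mem' j := by simpa using continuous_const
  neg_mem' hp j := by
    simp only [Pi.neg_apply, coeff_neg]
    exact (hp j).neg

variable {T R}

theorem esymm_mem {A : Type*} [CommRing A] (S : Subring A) {n m : ℕ} {v : Fin n → A}
    (hv : ∀ i, v i ∈ S) : esymm m v ∈ S :=
  sum_mem fun _ _ => prod_mem fun i _ => hv i

theorem continuous_coeff_esymmLine {n m : ℕ} {a b : T → Fin n → R}
    (ha : ∀ i, Continuous fun u => a u i) (hb : ∀ i, Continuous fun u => b u i) (j : ℕ) :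
    Continuous fun u => (esymmLine m (a u) (b u)).coeff j := by
  set F : Fin n → T → R[X] := fun i u => C (b u i) * X + C (a u i)
  have hline : ∀ i, F i ∈ continuousCoeffSubring T R := by
    intro i j
    simp only [F, coeff_add, coeff_C_mul_X, coeff_C]
    exact ((hb i).if_const _ continuous_const).add ((ha i).if_const _ continuous_const)
  have hfamily : (fun u => esymmLine m (a u) (b u)) = esymm m F :=
    _root_.funext fun u => (map_esymm (Pi.evalRingHom (fun _ => R[X]) u) m F).symm
  simpa only [← hfamily] using esymm_mem (continuousCoeffSubring T R) (m := m) hline j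

end ContinuousCoeff

section Roots

open NNReal

theorem exists_mem_roots_nnnorm_sub_lt (p : ℂ[X]) (z : ℂ) {ε : ℝ≥0}
    (h : ‖p.eval z‖₊ < ‖p.leadingCoeff‖₊ * ε ^ p.natDegree) : ∃ r ∈ p.roots, ‖z - r‖₊ < ε := by
  by_contra! hfar
  have hs := IsAlgClosed.splits p
  refine h.not_ge ?_
  rw [hs.eval_eq_prod_roots, nnnorm_mul, hs.natDegree_eq_card_roots]
  gcongr
  rw [← nnnormHom_apply, map_multiset_prod, Multiset.map_map]
  simpa using Multiset.pow_card_le_prod (s := p.roots.map fun r => ‖z - r‖₊)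
    (by simpa only [Multiset.forall_mem_map_iff] using hfar)

-- Hurwitz's theorem for polynomials of bounded degree.
theorem mem_of_isRoot_of_tendsto {ι : Type*} {l : Filter ι} [l.NeBot] {p : ι → ℂ[X]}
    {q : ℂ[X]} {m : ℕ} {c : ℝ≥0} (hc : 0 < c) {F : Set ℂ} (hF : IsClosed F)
    (hpq : ∀ z, Tendsto (fun i => (p i).eval z) l (𝓝 (q.eval z)))
    (hp : ∀ᶠ i in l, (p i).natDegree ≤ m ∧ c ≤ ‖(p i).coeff m‖₊ ∧
      ∀ z, (p i).IsRoot z → z ∈ F)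
    {z : ℂ} (hz : q.IsRoot z) : z ∈ F := by
  refine hF.closure_subset (Metric.mem_closure_iff.2 fun ε hε => ?_)
  lift ε to ℝ≥0 using hε.le
  have hsmall : ∀ᶠ i in l, ‖(p i).eval z‖₊ < c * ε ^ m := by
    have := (hpq z).nnnorm
    rw [hz.eq_zero, nnnorm_zero] at this
    exact this.eventually_lt_const (mul_pos hc (pow_pos (by exact_mod_cast hε) m))
  obtain ⟨i, ⟨hdeg, hlead, hroots⟩, hi⟩ := (hp.and hsmall).exists
  have hm : (p i).natDegree = m :=
    hdeg.antisymm (le_natDegree_of_ne_zero (nnnorm_pos.1 (hc.trans_le hlead)))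
  obtain ⟨r, hr, hzr⟩ := exists_mem_roots_nnnorm_sub_lt (p i) z (ε := ε) <| by
    rw [leadingCoeff, hm]
    exact hi.trans_le (by gcongr)
  exact ⟨r, hroots r (isRoot_of_mem_roots hr), by rw [dist_eq_norm]; exact_mod_cast hzr⟩

variable {T : Type*} [TopologicalSpace T] {p : T → ℂ[X]} {m : ℕ}

theorem exists_forall_isRoot_norm_le {K : Set T} (hK : IsCompact K)
    (hp : ∀ j, Continuous fun u => (p u).coeff j) (hdeg : ∀ u, (p u).natDegree ≤ m)
    (hlead : ∀ u ∈ K, (p u).coeff m ≠ 0) : ∃ R, ∀ u ∈ K, ∀ z, (p u).IsRoot z → ‖z‖ ≤ R := by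
  have hcont : ContinuousOn (fun u => (∑ j ∈ range m, ‖(p u).coeff j‖) / ‖(p u).coeff m‖) K :=
    (continuous_finsetSum _ fun j _ => (hp j).norm).continuousOn.div (hp m).norm.continuousOn
      fun u hu => norm_ne_zero_iff.2 (hlead u hu)
  obtain ⟨R, hR⟩ := hK.exists_bound_of_continuousOn hcont
  refine ⟨R + 1, fun u hu z hz => ?_⟩
  have hm : (p u).natDegree = m := (hdeg u).antisymm (le_natDegree_of_ne_zero (hlead u hu))
  have hroot := hz.norm_lt_cauchyBound (fun h => hlead u hu (by simp [h]))
  rw [cauchyBound, leadingCoeff, hm] at hroot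
  have hsup : (range m).sup (fun j => ‖(p u).coeff j‖₊) ≤ ∑ j ∈ range m, ‖(p u).coeff j‖₊ :=
    Finset.sup_le fun j hj => single_le_sum (f := fun j => ‖(p u).coeff j‖₊) (by simp) hj
  have hz' : (‖z‖₊ : ℝ) < ((∑ j ∈ range m, ‖(p u).coeff j‖₊) / ‖(p u).coeff m‖₊ + 1 : ℝ≥0) :=
    NNReal.coe_lt_coe.2 (hroot.trans_le (by gcongr))
  push_cast at hz'
  linarith [(hR u hu).trans' (le_abs_self _)]

theorem continuous_eval_of_continuous_coeff (hp : ∀ j, Continuous fun u => (p u).coeff j)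
    (hdeg : ∀ u, (p u).natDegree ≤ m) : Continuous fun x : T × ℂ => (p x.1).eval x.2 := by
  simp_rw [fun x : T × ℂ => eval_eq_sum_range' (Nat.lt_succ_of_le (hdeg x.1)) x.2]
  exact continuous_finsetSum _ fun j _ => ((hp j).comp continuous_fst).mul (continuous_snd.pow j)

theorem isRoot_mem_of_isPreconnected [T2Space T] {K : Set T} (hK : IsCompact K)
    (hKc : IsPreconnected K) (hp : ∀ j, Continuous fun u => (p u).coeff j)
    (hdeg : ∀ u, (p u).natDegree ≤ m) (hlead : ∀ u ∈ K, (p u).coeff m ≠ 0) {U : Set ℂ}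
    (hU : IsOpen U) (hbdry : ∀ u ∈ K, ∀ z ∈ closure U, (p u).IsRoot z → z ∈ U) {u₀ u₁ : T}
    (hu₀ : u₀ ∈ K) (hu₁ : u₁ ∈ K) (h₀ : ∀ z, (p u₀).IsRoot z → z ∈ U) :
    ∀ z, (p u₁).IsRoot z → z ∈ U := by
  have heval := continuous_eval_of_continuous_coeff hp hdeg
  obtain ⟨v, hvK, hvmin⟩ := hK.exists_isMinOn ⟨u₀, hu₀⟩ (hp m).nnnorm.continuousOn
  have hc : 0 < ‖(p v).coeff m‖₊ := nnnorm_pos.2 (hlead v hvK)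
  obtain ⟨R, hR⟩ := exists_forall_isRoot_norm_le hK hp hdeg hlead
  set G := {u ∈ K | ∀ z, (p u).IsRoot z → z ∈ U}
  set B := {u ∈ K | ∃ z, (p u).IsRoot z ∧ z ∉ U}
  have hG : K ∩ closure G ⊆ G := by
    rintro u ⟨huK, hu⟩
    have := mem_closure_iff_nhdsWithin_neBot.1 hu
    refine ⟨huK, fun z hz => hbdry u huK z ?_ hz⟩
    refine mem_of_isRoot_of_tendsto hc isClosed_closure (l := 𝓝[G] u) (fun z => ?_)
      (eventually_nhdsWithin_of_forall fun w hw =>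
        ⟨hdeg w, hvmin hw.1, fun z hz => subset_closure (hw.2 z hz)⟩) hz
    exact ((heval.comp (continuous_id.prodMk continuous_const)).tendsto u).mono_left
      nhdsWithin_le_nhds
  -- Roots are uniformly bounded on `K`, so `B` is the projection of a compact set.
  have hB : IsClosed B := by
    have hBW : B = Prod.fst '' ((K ×ˢ Metric.closedBall 0 R) ∩
        {x : T × ℂ | (p x.1).eval x.2 = 0 ∧ x.2 ∈ Uᶜ}) := by
      ext u
      constructor
      · rintro ⟨huK, z, hz, hzU⟩
        exact ⟨(u, z), ⟨⟨huK, mem_closedBall_zero_iff.2 (hR u huK z hz)⟩, hz, hzU⟩, rfl⟩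
      · rintro ⟨⟨u, z⟩, ⟨⟨huK, -⟩, hz, hzU⟩, rfl⟩
        exact ⟨huK, z, hz, hzU⟩
    rw [hBW]
    refine (((hK.prod (isCompact_closedBall 0 R)).inter_right ?_).image continuous_fst).isClosed
    exact (isClosed_eq heval continuous_const).inter (hU.isClosed_compl.preimage continuous_snd)
  by_contra! hbad
  obtain ⟨u, huK, huG, -, z, hz, hzU⟩ := isPreconnected_closed_iff.1 hKc (closure G) B
    isClosed_closure hB
    (fun u hu => by
      by_cases h : ∀ z, (p u).IsRoot z → z ∈ U
      · exact Or.inl (subset_closure ⟨hu, h⟩)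
      · push Not at h
        exact Or.inr ⟨hu, h⟩)
    ⟨u₀, hu₀, subset_closure ⟨hu₀, h₀⟩⟩ ⟨u₁, hu₁, hu₁, hbad⟩
  exact hzU ((hG ⟨huK, huG⟩).2 z hz)

end Roots

section Hyperbolic

variable {n m : ℕ}

theorem ofReal_esymm (m : ℕ) (w : Fin n → ℝ) :
    ((esymm m w : ℝ) : ℂ) = esymm m (fun i => (w i : ℂ)) :=
  map_esymm Complex.ofRealHom m w

theorem esymm_ofReal_ne_zero_of_mem_gammaK {x : Fin n → ℝ} (hx : x ∈ GammaK n m) :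
    esymm m (fun i => (x i : ℂ)) ≠ 0 := by
  rw [← ofReal_esymm]
  exact_mod_cast (esymm_pos_of_mem_gammaK hx le_rfl).ne'

theorem map_hasseDeriv {R S : Type*} [CommRing R] [CommRing S] (f : R →+* S) (k : ℕ)
    (p : R[X]) : (hasseDeriv k p).map f = hasseDeriv k (p.map f) := by
  ext i
  simp [hasseDeriv_coeff]

theorem card_roots_iterate_derivative_ge (p : ℝ[X]) (l : ℕ) :
    p.roots.card - l ≤ (derivative^[l] p).roots.card := by
  induction l with
  | zero => simp
  | succ l ih =>
    rw [Function.iterate_succ_apply']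
    have := card_roots_le_derivative (derivative^[l] p)
    omega

theorem im_eq_zero_of_esymm_add_eq_zero (hmn : m ≤ n) (y : Fin n → ℝ) {z : ℂ}
    (hz : esymm m (fun i => (y i : ℂ) + z) = 0) : z.im = 0 := by
  rcases Nat.eq_zero_or_pos m with rfl | hm
  · simp at hz
  set P : ℝ[X] := ∏ i, (X + C (y i))
  set Q := hasseDeriv (n - m) P
  have hPsplit : P.Splits := Splits.prod fun i _ => Splits.X_add_C (y i)
  have hPdeg : P.natDegree = n := by
    rw [natDegree_prod_of_monic _ _ fun i _ => monic_X_add_C (y i)]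
    simp
  have hQdeg : Q.natDegree = m := by
    rw [natDegree_hasseDeriv, hPdeg]
    omega
  have hQroots : m ≤ Q.roots.card := by
    have h := card_roots_iterate_derivative_ge P (n - m)
    rw [← factorial_smul_hasseDeriv, LinearMap.smul_apply, ← Nat.cast_smul_eq_nsmul ℝ,
      roots_smul_nonzero _ (by positivity), ← hPsplit.natDegree_eq_card_roots, hPdeg] at h
    exact (Nat.sub_sub_self hmn).symm.le.trans h
  have hQ0 : Q ≠ 0 := fun h => by simp [h] at hQroots; omega
  have hQsplit : Q.Splits :=
    splits_iff_card_roots.2 (le_antisymm (card_roots' Q) (hQdeg ▸ hQroots))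
  have heval : (Q.map Complex.ofRealHom).eval z = esymm m (fun i => (y i : ℂ) + z) := by
    rw [map_hasseDeriv, Polynomial.map_prod, ← eval_hasseDeriv_prod_X_add_C hmn]
    simp
  have hz' : z ∈ (Q.map Complex.ofRealHom).roots :=
    (mem_roots (Polynomial.map_ne_zero hQ0)).2 (heval.trans hz)
  rw [hQsplit.roots_map] at hz'
  obtain ⟨r, -, rfl⟩ := Multiset.mem_map.1 hz'
  simp

theorem isCompact_segment {E : Type*} [AddCommGroup E] [Module ℝ E] [TopologicalSpace E]
    [IsTopologicalAddGroup E] [ContinuousSMul ℝ E] (x y : E) : IsCompact (segment ℝ x y) := by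
  rw [← convexHull_pair]
  exact (Set.toFinite _).isCompact_convexHull (𝕜 := ℝ)

theorem im_neg_of_esymm_add_I_eq_zero (hmn : m ≤ n) {x : Fin n → ℝ} (hx : x ∈ GammaK n m)
    (y : Fin n → ℝ) {s : ℝ} (hs : 0 < s) {z : ℂ}
    (hz : esymm m (fun i => (y i + s * Complex.I) + z * x i) = 0) : z.im < 0 := by
  have hsub := segment_one_subset_gammaK hmn hx
  refine isRoot_mem_of_isPreconnected (p := fun v => esymmLine m (fun i => y i + s * Complex.I)
      (fun i => (v i : ℂ))) (isCompact_segment 1 x) (convex_segment 1 x).isPreconnected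
    (continuous_coeff_esymmLine (fun _ => continuous_const)
      fun i => Complex.continuous_ofReal.comp (continuous_apply i))
    (fun _ => natDegree_esymmLine_le _ _ _) (fun v hv => ?_)
    (isOpen_lt Complex.continuous_im continuous_const) (fun v hv w hw hroot => ?_)
    (left_mem_segment ℝ 1 x) (right_mem_segment ℝ 1 x) (fun w hroot => ?_) z
    (by rwa [IsRoot, eval_esymmLine])
  · exact (coeff_esymmLine _ _ _).trans_ne (esymm_ofReal_ne_zero_of_mem_gammaK (hsub hv))
  · rw [Complex.closure_setOfPred_im_lt, Set.mem_ofPred_eq] at hw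
    refine lt_of_le_of_ne hw fun hw0 => hs.ne' ?_
    obtain ⟨t, rfl⟩ : ∃ t : ℝ, w = t := ⟨w.re, Complex.ext (by simp) (by simp [hw0])⟩
    have hreal := im_eq_zero_of_esymm_add_eq_zero hmn (fun i => y i + t * v i)
      (z := s * Complex.I) ?_
    · simpa using hreal
    · rw [IsRoot, eval_esymmLine] at hroot
      rw [← hroot]
      congr 1
      ext i
      push_cast
      ring
  · rw [IsRoot, eval_esymmLine] at hroot
    have hreal := im_eq_zero_of_esymm_add_eq_zero hmn y (z := s * Complex.I + w) ?_
    · simp at hreal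
      show w.im < 0
      linarith
    · rw [← hroot]
      congr 1
      ext i
      simp
      ring

theorem im_eq_zero_of_esymm_add_mul_eq_zero (hmn : m ≤ n) {x : Fin n → ℝ}
    (hx : x ∈ GammaK n m) (y : Fin n → ℝ) {z : ℂ}
    (hz : esymm m (fun i => y i + z * x i) = 0) : z.im = 0 := by
  have hnonpos : ∀ w : ℂ, esymm m (fun i => y i + w * x i) = 0 → w.im ≤ 0 := by
    intro w hw
    have hc : 0 < ‖esymm m (fun i => (x i : ℂ))‖₊ :=
      nnnorm_pos.2 (esymm_ofReal_ne_zero_of_mem_gammaK hx)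
    refine mem_of_isRoot_of_tendsto (l := 𝓝[>] (0 : ℝ)) (m := m)
      (p := fun s => esymmLine m (fun i => y i + s * Complex.I) (fun i => (x i : ℂ)))
      (q := esymmLine m (fun i => (y i : ℂ)) (fun i => (x i : ℂ))) hc
      (isClosed_le Complex.continuous_im continuous_const) (fun w => ?_) ?_
      (by rwa [IsRoot, eval_esymmLine])
    · simp only [eval_esymmLine]
      have : Continuous fun s : ℝ => esymm m (fun i => (y i + s * Complex.I) + w * x i) :=
        (continuous_esymm m).comp (continuous_pi fun i => by fun_prop)
      simpa using (this.tendsto 0).mono_left nhdsWithin_le_nhds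
    · filter_upwards [self_mem_nhdsWithin] with s hs
      refine ⟨natDegree_esymmLine_le _ _ _, by rw [coeff_esymmLine], fun w hw => ?_⟩
      rw [IsRoot, eval_esymmLine] at hw
      exact (im_neg_of_esymm_add_I_eq_zero hmn hx y hs hw).le
  refine le_antisymm (hnonpos z hz) ?_
  have hconj := congrArg (starRingEnd ℂ) hz
  rw [map_esymm, map_zero] at hconj
  simpa using hnonpos (starRingEnd ℂ z) (by simpa using hconj)

theorem exists_ofReal_of_esymm_add_mul_eq_zero (hmn : m ≤ n) {x : Fin n → ℝ}
    (hx : x ∈ GammaK n m) (y : Fin n → ℝ) {z : ℂ}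
    (hz : esymm m (fun i => y i + z * x i) = 0) :
    ∃ t : ℝ, z = t ∧ esymm m (fun i => y i + t * x i) = 0 := by
  obtain ⟨t, rfl⟩ : ∃ t : ℝ, z = t :=
    ⟨z.re, Complex.ext rfl (by simpa using im_eq_zero_of_esymm_add_mul_eq_zero hmn hx y hz)⟩
  refine ⟨t, rfl, ?_⟩
  have := (ofReal_esymm m fun i => y i + t * x i).trans (by simpa using hz)
  exact_mod_cast this

end Hyperbolic

section Convexity

variable {n m : ℕ}

theorem one_add_mul_mem_gammaK (hmn : m ≤ n) {x : Fin n → ℝ} (hx : x ∈ GammaK n m) {t : ℝ}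
    (ht : 0 ≤ t) : (fun i => 1 + t * x i) ∈ GammaK n m := by
  have h1t : 0 < 1 + t := by linarith
  have hseg : (1 + t)⁻¹ • (1 : Fin n → ℝ) + (t / (1 + t)) • x ∈ segment ℝ 1 x :=
    ⟨_, _, by positivity, by positivity, by field_simp, rfl⟩
  convert smul_mem_gammaK h1t (segment_one_subset_gammaK hmn hx hseg) using 1
  ext i
  simp
  field_simp

theorem neg_of_esymm_add_mul_eq_zero (hmn : m ≤ n) {x y : Fin n → ℝ} (hx : x ∈ GammaK n m)
    (hy : y ∈ GammaK n m) {t : ℝ} (ht : esymm m (fun i => y i + t * x i) = 0) : t < 0 := by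
  have hsub := segment_one_subset_gammaK hmn hy
  refine isRoot_mem_of_isPreconnected
    (p := fun v => esymmLine m (fun i => (v i : ℂ)) (fun i => (x i : ℂ)))
    (isCompact_segment 1 y) (convex_segment 1 y).isPreconnected
    (continuous_coeff_esymmLine (fun i => Complex.continuous_ofReal.comp (continuous_apply i))
      fun _ => continuous_const)
    (fun _ => natDegree_esymmLine_le _ _ _)
    (fun _ _ => (coeff_esymmLine _ _ _).trans_ne (esymm_ofReal_ne_zero_of_mem_gammaK hx))
    (isOpen_lt Complex.continuous_re continuous_const) (fun v hv w hw hroot => ?_)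
    (left_mem_segment ℝ 1 y) (right_mem_segment ℝ 1 y) (fun w hroot => ?_) t ?_
  · rw [IsRoot, eval_esymmLine] at hroot
    obtain ⟨s, rfl, hs⟩ := exists_ofReal_of_esymm_add_mul_eq_zero hmn hx v hroot
    rw [Complex.closure_setOfPred_re_lt, Set.mem_ofPred_eq, Complex.ofReal_re] at hw
    refine (lt_of_le_of_ne hw fun hs0 => ?_ : s < 0)
    subst hs0
    exact (esymm_pos_of_mem_gammaK (hsub hv) le_rfl).ne' (by simpa using hs)
  · rw [IsRoot, eval_esymmLine] at hroot
    obtain ⟨s, rfl, hs⟩ := exists_ofReal_of_esymm_add_mul_eq_zero hmn hx 1 hroot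
    show (s : ℂ).re < 0
    rw [Complex.ofReal_re]
    by_contra! hs0
    exact (esymm_pos_of_mem_gammaK (one_add_mul_mem_gammaK hmn hx hs0) le_rfl).ne'
      (by simpa using hs)
  · have := congrArg ((↑) : ℝ → ℂ) ht
    rw [ofReal_esymm] at this
    simpa [IsRoot, eval_esymmLine] using this

theorem esymm_add_pos (hmn : m ≤ n) {x y : Fin n → ℝ} (hx : x ∈ GammaK n m)
    (hy : y ∈ GammaK n m) : 0 < esymm m (y + x) := by
  have hf : Continuous fun t : ℝ => esymm m (fun i => y i + t * x i) :=
    (continuous_esymm m).comp (by fun_prop)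
  by_contra! h1
  obtain ⟨t, ht, hft⟩ := intermediate_value_Icc' zero_le_one hf.continuousOn
    ⟨by convert h1 using 2; simp; rfl, by simpa using (esymm_pos_of_mem_gammaK hy le_rfl).le⟩
  exact (neg_of_esymm_add_mul_eq_zero hmn hx hy hft).not_ge ht.1

theorem add_mem_gammaK {k : ℕ} (hkn : k ≤ n) {x y : Fin n → ℝ} (hx : x ∈ GammaK n k)
    (hy : y ∈ GammaK n k) : x + y ∈ GammaK n k := by
  intro j hj hjk
  rw [esymmFun_eq_esymm, add_comm]
  exact esymm_add_pos (hjk.trans hkn) (gammaK_subset_of_le hjk hx) (gammaK_subset_of_le hjk hy)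

theorem convex_gammaK {k : ℕ} (hkn : k ≤ n) : Convex ℝ (GammaK n k) :=
  convex_iff_forall_pos.2 fun _ hx _ hy _ _ ha hb _ =>
    add_mem_gammaK hkn (smul_mem_gammaK ha hx) (smul_mem_gammaK hb hy)

end Convexity

end Garding

theorem gammaK_open_convex_symmetric_cone_general (n k : ℕ) (hkn : k ≤ n) :
    IsOpen (GammaK n k) ∧ Convex ℝ (GammaK n k) ∧
    (∀ t : ℝ, 0 < t → ∀ lam ∈ GammaK n k, t • lam ∈ GammaK n k) ∧
    (∀ σ : Equiv.Perm (Fin n), ∀ lam ∈ GammaK n k, (lam ∘ σ) ∈ GammaK n k) ∧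
    {lam : Fin n → ℝ | ∀ i, 0 < lam i} ⊆ GammaK n k :=
  ⟨Garding.isOpen_gammaK, Garding.convex_gammaK hkn,
    fun _ ht _ h => Garding.smul_mem_gammaK ht h,
    fun σ _ h => Garding.comp_perm_mem_gammaK σ h,
    fun _ h => Garding.mem_gammaK_of_pos hkn h⟩

/-- `Γ_k` is an open convex symmetric cone with vertex at the origin
containing the positive cone `Γ⁺`. -/
theorem gammaK_open_convex_symmetric_cone (n k : ℕ) (hn : 1 ≤ n) (hk1 : 1 ≤ k)
    (hkn : k ≤ n) :
    IsOpen (GammaK n k) ∧ Convex ℝ (GammaK n k) ∧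
    (∀ t : ℝ, 0 < t → ∀ lam ∈ GammaK n k, t • lam ∈ GammaK n k) ∧
    (∀ σ : Equiv.Perm (Fin n), ∀ lam ∈ GammaK n k, (lam ∘ σ) ∈ GammaK n k) ∧
    {lam : Fin n → ℝ | ∀ i, 0 < lam i} ⊆ GammaK n k :=
  gammaK_open_convex_symmetric_cone_general n k hkn
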